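/- arXiv:2210.01793 — 2 statements merged into one kernel-verified Lean document; each statement's English description precedes it below -/
import Mathlib

section
/- For all integers k ≥ 3 and n ≥ 2, and any two distinct indices i, j with 1 ≤ i, j ≤ n, the class of the divisor η_{i,j} in the critical group K(H_{k,n}) has additive order exactly k−1. -/
/-- Vertex set of the hinge graph `H_{k,n}`: two shared vertices `u, w`
(encoded as `Sum.inl 0`, `Sum.inl 1`) together with the vertices
`v_{i,j}` (encoded as `Sum.inr (i, j)`, zero-indexed). -/
abbrev HingeVertex (k n : ℕ) : Type := Fin 2 ⊕ (Fin n × Fin (k - 2))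

/-- The shared vertex `u`. -/
def hu (k n : ℕ) : HingeVertex k n := Sum.inl 0

/-- The shared vertex `w`. -/
def hw (k n : ℕ) : HingeVertex k n := Sum.inl 1

/-- The vertex `v_{i+1,j+1}` of the `i+1`-st cycle (zero-indexed here). -/
def hv (k n : ℕ) (i : Fin n) (j : Fin (k - 2)) : HingeVertex k n := Sum.inr (i, j)

/-- The base (Boolean) edge relation of the hinge graph: `u-w`, `u-v_{i,1}`,
`v_{i,j}-v_{i,j+1}`, `v_{i,k-2}-w`. -/
def hingeRelB (k n : ℕ) : HingeVertex k n → HingeVertex k n → Bool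
  | Sum.inl a, Sum.inl b => a != b
  | Sum.inl a, Sum.inr p => a == 0 && p.2.val == 0
  | Sum.inr p, Sum.inl b => b == 1 && p.2.val == k - 3
  | Sum.inr p, Sum.inr q => p.1 == q.1 && q.2.val == p.2.val + 1

/-- The hinge graph `H_{k,n}`: `n` cycles of length `k` glued along the edge `{u, w}`. -/
def Hinge (k n : ℕ) : SimpleGraph (HingeVertex k n) :=
  SimpleGraph.fromRel (fun x y => hingeRelB k n x y = true)

instance (k n : ℕ) : DecidableRel (Hinge k n).Adj := fun x y =>
  inferInstanceAs (Decidable (x ≠ y ∧ (hingeRelB k n x y = true ∨ hingeRelB k n y x = true)))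

/-- The number of spanning trees of a graph `G`: the number of edge sets `s ⊆ E(G)`
whose associated spanning subgraph (on all of `V`) is connected and acyclic. -/
noncomputable def spanningTreeCount {V : Type*} (G : SimpleGraph V) : ℕ :=
  Set.ncard {s : Set (Sym2 V) | s ⊆ G.edgeSet ∧ (SimpleGraph.fromEdgeSet s).IsTree}

/-- The degree homomorphism on divisors. -/
def degHom (V : Type*) [Fintype V] : (V → ℤ) →+ ℤ where
  toFun D := ∑ v, D v
  map_zero' := by simp
  map_add' x y := by simp [Finset.sum_add_distrib]

/-- The group `Div⁰` of degree-zero divisors. -/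
def Div0 (V : Type*) [Fintype V] : AddSubgroup (V → ℤ) := (degHom V).ker

/-- The group of principal divisors: the image of the Laplacian `L = Deg - A`. -/
def Prin {V : Type*} [Fintype V] [DecidableEq V] (G : SimpleGraph V) [DecidableRel G.Adj] :
    AddSubgroup (V → ℤ) :=
  AddMonoidHom.range (Matrix.mulVecLin (G.lapMatrix ℤ)).toAddMonoidHom

/-- The critical group `K(G) = Div⁰(G) / Prin(G)`. -/
def CriticalGroup {V : Type*} [Fintype V] [DecidableEq V] (G : SimpleGraph V)
    [DecidableRel G.Adj] : Type _ :=
  Div0 V ⧸ ((Prin G).addSubgroupOf (Div0 V))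

noncomputable instance {V : Type*} [Fintype V] [DecidableEq V] (G : SimpleGraph V)
    [DecidableRel G.Adj] : AddCommGroup (CriticalGroup G) :=
  inferInstanceAs (AddCommGroup (Div0 V ⧸ ((Prin G).addSubgroupOf (Div0 V))))

/-- The class of a degree-zero divisor in the critical group. -/
def divisorClass {V : Type*} [Fintype V] [DecidableEq V] (G : SimpleGraph V)
    [DecidableRel G.Adj] (D : V → ℤ) (hD : D ∈ Div0 V) : CriticalGroup G :=
  (QuotientAddGroup.mk (⟨D, hD⟩ : Div0 V) :
    Div0 V ⧸ ((Prin G).addSubgroupOf (Div0 V)))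

/-- The divisor with value `1` at `x`, `-1` at `y` (for `x ≠ y`) and `0` elsewhere. -/
def pointDiff {V : Type*} [DecidableEq V] (x y : V) : V → ℤ :=
  fun z => (if z = x then 1 else 0) - (if z = y then 1 else 0)

lemma pointDiff_mem {V : Type*} [Fintype V] [DecidableEq V] (x y : V) :
    pointDiff x y ∈ Div0 V := by
  simp [Div0, AddMonoidHom.mem_ker, degHom, pointDiff, Finset.sum_sub_distrib]

/-!
Along the `l`-th branch `u = x₀, x₁ = v_{l,1}, …, x_{k-1} = w`, a function `g` whose Laplacian
is supported on the first vertices, with value `c l` at `x₁`, is affine on `x₁, …, x_{k-1}` and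
has a kink of size `c l` at `x₁`. Hence `g w - g u = (k - 1) s_l - (k - 2) c_l`, where `s_l` is the
slope on the first edge, while the row of `u` says `∑ s_l = g u - g w`. Summing over the branches
gives `(n + k - 1) (g w - g u) = 0`, so `g w = g u` and `(k - 1) ∣ c_l`. Conversely, if
`∑ c_l = 0`, the potential equal to `c_l (k - 1 - t)` at `x_t` for `0 < t` and to `0` at `u` has
Laplacian `(k - 1)` times this divisor. As `η_{i,j}` is the case `c = e_i - e_j`, the multiple
`m η_{i,j}` is principal exactly when `(k - 1) ∣ m`.
-/

open Matrix

theorem SimpleGraph.lapMatrix_mulVec_apply_eq_sum {V R : Type*} [Fintype V] [DecidableEq V]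
    (G : SimpleGraph V) [DecidableRel G.Adj] [NonAssocRing R] (g : V → R) (x : V) :
    (G.lapMatrix R *ᵥ g) x = ∑ y ∈ G.neighborFinset x, (g x - g y) := by
  rw [G.lapMatrix_mulVec_apply, Finset.sum_sub_distrib, Finset.sum_const,
    G.card_neighborFinset_eq_degree, nsmul_eq_mul]

theorem divisorClass_nsmul_eq_zero_iff {V : Type*} [Fintype V] [DecidableEq V]
    (G : SimpleGraph V) [DecidableRel G.Adj] (D : V → ℤ) (hD : D ∈ Div0 V) (m : ℕ) :
    m • divisorClass G D hD = 0 ↔ ∃ g : V → ℤ, G.lapMatrix ℤ *ᵥ g = m • D := by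
  show m • (QuotientAddGroup.mk ⟨D, hD⟩ : Div0 V ⧸ (Prin G).addSubgroupOf (Div0 V)) = 0 ↔ _
  rw [← QuotientAddGroup.mk_nsmul, QuotientAddGroup.eq_zero_iff,
    AddSubgroup.mem_addSubgroupOf]
  rfl

theorem eq_of_two_mul_sub_sub_eq_ite {a : ℕ → ℤ} {N : ℕ} {c : ℤ}
    (h : ∀ t, t + 2 ≤ N → 2 * a (t + 1) - a t - a (t + 2) = if t = 0 then c else 0) :
    ∀ t, t + 1 ≤ N → a (t + 1) = a 0 + (t + 1) * (a 1 - a 0) - t * c := by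
  have step : ∀ t, t + 2 ≤ N → a (t + 2) - a (t + 1) = a 1 - a 0 - c := by
    intro t ht
    induction t with
    | zero =>
      have h0 := h 0 ht
      simp only [zero_add, ↓reduceIte] at h0 ⊢
      linarith
    | succ t ih =>
      have := h (t + 1) ht
      simp only [Nat.add_one_ne_zero, if_false] at this
      linarith [ih (by omega)]
  intro t ht
  induction t with
  | zero => simp
  | succ t ih =>
    push_cast
    linarith [ih (by omega), step t ht]

namespace Hinge

open Finset

variable {k n : ℕ}

def branch (k : ℕ) (l : Fin n) (t : ℕ) : HingeVertex k n :=
  if t = 0 then hu k n else if h : t - 1 < k - 2 then hv k n l ⟨t - 1, h⟩ else hw k n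

lemma branch_zero (l : Fin n) : branch k l 0 = hu k n := rfl

lemma branch_succ (l : Fin n) {t : ℕ} (ht : t < k - 2) :
    branch k l (t + 1) = hv k n l ⟨t, ht⟩ := by
  simp [branch, ht]

lemma branch_sub_one (hk : 2 ≤ k) (l : Fin n) : branch k l (k - 1) = hw k n := by
  rw [branch, if_neg (by omega), dif_neg (by omega)]

lemma adj_hu_iff (hk : 3 ≤ k) (y : HingeVertex k n) :
    (Hinge k n).Adj (hu k n) y ↔ y = hw k n ∨ ∃ l, y = hv k n l ⟨0, Nat.sub_pos_of_lt hk⟩ := by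
  rcases y with a | ⟨l, s⟩
  · fin_cases a <;> simp [Hinge, hingeRelB, hu, hw, hv]
  · simp [Hinge, hingeRelB, hv, hu, hw, Prod.ext_iff, Fin.ext_iff]

lemma adj_hw_iff (hk : 3 ≤ k) (y : HingeVertex k n) :
    (Hinge k n).Adj (hw k n) y ↔ y = hu k n ∨ ∃ l, y = hv k n l ⟨k - 3, by omega⟩ := by
  rcases y with a | ⟨l, s⟩
  · fin_cases a <;> simp [Hinge, hingeRelB, hu, hw, hv]
  · simp [Hinge, hingeRelB, hv, hu, hw, Prod.ext_iff, Fin.ext_iff]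

lemma adj_hv_iff (l : Fin n) (s : Fin (k - 2)) (y : HingeVertex k n) :
    (Hinge k n).Adj (hv k n l s) y ↔ y = branch k l s ∨ y = branch k l (s + 2) := by
  rcases y with a | ⟨l', s'⟩
  · fin_cases a <;> simp [Hinge, hingeRelB, hv, branch, hu, hw] <;> split_ifs <;> simp <;> omega
  · simp [Hinge, hingeRelB, hv, branch, hu, hw, Prod.ext_iff, Fin.ext_iff]
    split_ifs <;> simp [Prod.ext_iff, Fin.ext_iff] <;> omega

lemma lapMatrix_mulVec_hu (hk : 3 ≤ k) (g : HingeVertex k n → ℤ) :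
    ((Hinge k n).lapMatrix ℤ *ᵥ g) (hu k n) =
      (g (hu k n) - g (hw k n)) +
        ∑ l, (g (hu k n) - g (hv k n l ⟨0, Nat.sub_pos_of_lt hk⟩)) := by
  have hnbr : (Hinge k n).neighborFinset (hu k n) =
      insert (hw k n) (univ.image fun l => hv k n l ⟨0, Nat.sub_pos_of_lt hk⟩) := by
    ext y
    simp [adj_hu_iff hk, eq_comm]
  rw [SimpleGraph.lapMatrix_mulVec_apply_eq_sum, hnbr, sum_insert (by simp [hw, hv]),
    sum_image fun a _ b _ h => by simpa [hv] using h]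

lemma lapMatrix_mulVec_hw (hk : 3 ≤ k) (g : HingeVertex k n → ℤ) :
    ((Hinge k n).lapMatrix ℤ *ᵥ g) (hw k n) =
      (g (hw k n) - g (hu k n)) + ∑ l, (g (hw k n) - g (hv k n l ⟨k - 3, by omega⟩)) := by
  have hnbr : (Hinge k n).neighborFinset (hw k n) =
      insert (hu k n) (univ.image fun l => hv k n l ⟨k - 3, by omega⟩) := by
    ext y
    simp [adj_hw_iff hk, eq_comm]
  rw [SimpleGraph.lapMatrix_mulVec_apply_eq_sum, hnbr, sum_insert (by simp [hu, hv]),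
    sum_image fun a _ b _ h => by simpa [hv] using h]

lemma lapMatrix_mulVec_branch (g : HingeVertex k n → ℤ) (l : Fin n) {t : ℕ} (ht : t < k - 2) :
    ((Hinge k n).lapMatrix ℤ *ᵥ g) (branch k l (t + 1)) =
      (g (branch k l (t + 1)) - g (branch k l t)) +
        (g (branch k l (t + 1)) - g (branch k l (t + 2))) := by
  have hnbr : (Hinge k n).neighborFinset (branch k l (t + 1)) =
      {branch k l t, branch k l (t + 2)} := by
    ext y
    simp [branch_succ l ht, adj_hv_iff]
  rw [SimpleGraph.lapMatrix_mulVec_apply_eq_sum, hnbr, sum_pair]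
  simp only [branch, Nat.add_eq_zero_iff, OfNat.ofNat_ne_zero, and_false, ↓reduceIte]
  split_ifs <;> simp only [hu, hv, hw, ne_eq, reduceCtorEq, Sum.inl.injEq, Prod.mk.injEq,
    Sum.inr.injEq, Fin.mk.injEq, Fin.isValue, zero_ne_one, true_and, not_true_eq_false,
    not_false_eq_true] <;> omega

def firstVertexDivisor (k : ℕ) (c : Fin n → ℤ) : HingeVertex k n → ℤ
  | .inl _ => 0
  | .inr (l, s) => if s.val = 0 then c l else 0

def potential (k : ℕ) (c : Fin n → ℤ) : HingeVertex k n → ℤ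
  | .inl _ => 0
  | .inr (l, s) => c l * ((k : ℤ) - 2 - s)

lemma firstVertexDivisor_branch_succ (c : Fin n → ℤ) (l : Fin n) {t : ℕ} (ht : t < k - 2) :
    firstVertexDivisor k c (branch k l (t + 1)) = if t = 0 then c l else 0 := by
  simp [branch_succ l ht, firstVertexDivisor, hv]

lemma potential_branch (c : Fin n → ℤ) (l : Fin n) {t : ℕ} (ht : t + 1 ≤ k) :
    potential k c (branch k l t) = if t = 0 then 0 else c l * ((k : ℤ) - 1 - t) := by
  unfold branch
  split_ifs with h0 h1
  · rfl
  · simp only [potential, hv]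
    push_cast [Nat.cast_sub (Nat.one_le_iff_ne_zero.2 h0)]
    ring
  · simp only [potential, hw]
    rw [show (t : ℤ) = k - 1 by omega]
    ring

lemma firstVertexDivisor_nsmul (m : ℕ) (c : Fin n → ℤ) :
    firstVertexDivisor k (m • c) = m • firstVertexDivisor k c := by
  funext x
  rcases x with a | ⟨l, s⟩ <;> simp [firstVertexDivisor]

lemma lapMatrix_mulVec_potential (hk : 3 ≤ k) {c : Fin n → ℤ} (hc : ∑ l, c l = 0) :
    (Hinge k n).lapMatrix ℤ *ᵥ potential k c = ((k : ℤ) - 1) • firstVertexDivisor k c := by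
  funext x
  rcases x with a | ⟨l, s⟩
  · fin_cases a
    · show ((Hinge k n).lapMatrix ℤ *ᵥ potential k c) (hu k n) = _
      rw [lapMatrix_mulVec_hu hk]
      simp [potential, firstVertexDivisor, hu, hw, hv, ← sum_mul, hc]
    · show ((Hinge k n).lapMatrix ℤ *ᵥ potential k c) (hw k n) = _
      rw [lapMatrix_mulVec_hw hk]
      simp [potential, firstVertexDivisor, hu, hw, hv, ← sum_mul, hc]
  · have hs := s.isLt
    change (_ *ᵥ _) (hv k n l ⟨s, hs⟩) =
      ((k : ℤ) - 1) * firstVertexDivisor k c (hv k n l ⟨s, hs⟩)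
    rw [← branch_succ l hs, lapMatrix_mulVec_branch _ l hs,
      firstVertexDivisor_branch_succ c l hs, potential_branch c l (by omega),
      potential_branch c l (by omega), potential_branch c l (by omega)]
    by_cases h0 : (s : ℕ) = 0 <;>
      simp only [h0, Nat.add_eq_zero_iff, one_ne_zero, OfNat.ofNat_ne_zero, and_false,
        ↓reduceIte] <;>
      push_cast <;> ring

lemma dvd_of_lapMatrix_mulVec_eq_firstVertexDivisor (hk : 3 ≤ k) {c : Fin n → ℤ}
    (hc : ∑ l, c l = 0)
    {g : HingeVertex k n → ℤ} (hg : (Hinge k n).lapMatrix ℤ *ᵥ g = firstVertexDivisor k c)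
    (l : Fin n) : ((k : ℤ) - 1) ∣ c l := by
  set D := g (hw k n) - g (hu k n)
  set slope : Fin n → ℤ := fun l => g (hv k n l ⟨0, Nat.sub_pos_of_lt hk⟩) - g (hu k n)
  have hbranch : ∀ l, D = ((k : ℤ) - 1) * slope l - ((k : ℤ) - 2) * c l := by
    intro l
    have := eq_of_two_mul_sub_sub_eq_ite (a := g ∘ branch k l) (N := k - 1) (c := c l)
      (fun t ht => by
        have ht' : t < k - 2 := by omega
        rw [← firstVertexDivisor_branch_succ c l ht', ← hg, lapMatrix_mulVec_branch g l ht']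
        simp only [Function.comp]
        ring) (k - 2) (by omega)
    rw [show k - 2 + 1 = k - 1 by omega] at this
    simp only [Function.comp, branch_zero, branch_sub_one (by omega : 2 ≤ k),
      branch_succ l (by omega : 0 < k - 2)] at this
    push_cast [Nat.cast_sub (by omega : 2 ≤ k)] at this
    linarith
  have hrow : ∑ l, slope l = -D := by
    have := congrFun hg (hu k n)
    rw [lapMatrix_mulVec_hu hk, show firstVertexDivisor k c (hu k n) = 0 from rfl] at this
    simp only [slope, D, sum_sub_distrib] at this ⊢
    linarith
  have hD : D = 0 := by
    have hsum : ∑ _l : Fin n, D = ∑ l, (((k : ℤ) - 1) * slope l - ((k : ℤ) - 2) * c l) :=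
      Fintype.sum_congr _ _ hbranch
    rw [sum_const, card_univ, Fintype.card_fin, nsmul_eq_mul, sum_sub_distrib, ← mul_sum,
      ← mul_sum, hc, hrow] at hsum
    have : ((n : ℤ) + k - 1) * D = 0 := by linear_combination hsum
    exact (mul_eq_zero.1 this).resolve_left (by omega)
  exact ⟨c l - slope l, by linarith [hbranch l]⟩

theorem exists_lapMatrix_mulVec_eq_firstVertexDivisor_iff (hk : 3 ≤ k) {c : Fin n → ℤ}
    (hc : ∑ l, c l = 0) :
    (∃ g, (Hinge k n).lapMatrix ℤ *ᵥ g = firstVertexDivisor k c) ↔ ∀ l, ((k : ℤ) - 1) ∣ c l := by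
  refine ⟨fun ⟨g, hg⟩ => dvd_of_lapMatrix_mulVec_eq_firstVertexDivisor hk hc hg, fun h => ?_⟩
  choose d hd using h
  have hk1 : (k : ℤ) - 1 ≠ 0 := by omega
  have hdsum : ∑ l, d l = 0 := by
    simpa [hd, ← mul_sum, hk1] using hc
  refine ⟨potential k d, ?_⟩
  rw [lapMatrix_mulVec_potential hk hdsum]
  funext x
  rcases x with a | ⟨l, s⟩ <;> simp [firstVertexDivisor, hd]

lemma pointDiff_hv_zero (hk : 3 ≤ k) (i j : Fin n) :
    pointDiff (hv k n i ⟨0, Nat.sub_pos_of_lt hk⟩) (hv k n j ⟨0, Nat.sub_pos_of_lt hk⟩) =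
      firstVertexDivisor k (pointDiff i j) := by
  funext x
  rcases x with a | ⟨l, s⟩
  · simp [pointDiff, firstVertexDivisor, hv]
  · by_cases hs : (s : ℕ) = 0 <;>
      simp [pointDiff, firstVertexDivisor, hv, Prod.ext_iff, Fin.ext_iff, hs]

end Hinge

/-- For all integers `k ≥ 3`, `n ≥ 2` and distinct indices `i ≠ j`, the class
of the divisor `η_{i,j}` (value `1` at `v_{i,1}`, `-1` at `v_{j,1}`, `0` elsewhere) in the
critical group `K(H_{k,n})` has additive order exactly `k - 1`. -/
theorem hinge_eta_addOrderOf (k n : ℕ) (hk : 3 ≤ k) (i j : Fin n) (hij : i ≠ j) :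
    addOrderOf (divisorClass (Hinge k n)
      (pointDiff (hv k n i ⟨0, by omega⟩) (hv k n j ⟨0, by omega⟩))
      (pointDiff_mem _ _)) = k - 1 := by
  have hsum : ∑ l, pointDiff i j l = 0 := pointDiff_mem i j
  refine Nat.dvd_right_iff_eq.1 fun m => ?_
  rw [addOrderOf_dvd_iff_nsmul_eq_zero, divisorClass_nsmul_eq_zero_iff, Hinge.pointDiff_hv_zero hk,
    ← Hinge.firstVertexDivisor_nsmul,
    Hinge.exists_lapMatrix_mulVec_eq_firstVertexDivisor_iff hk (by simp [← Finset.mul_sum, hsum]),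
    ← Int.natCast_dvd_natCast, Nat.cast_sub (by omega : 1 ≤ k), Nat.cast_one]
  exact ⟨fun h => by simpa [pointDiff, hij] using h i,
    fun h l => by simpa using h.mul_right (pointDiff i j l)⟩
end

section
/- For all integers k ≥ 3 and n ≥ 3, the critical group K(H_{k,n}) of the hinge graph H_{k,n} is not a cyclic group. -/
/-! For a cycle `a`, let `f_a` climb the `a`-th cycle from `u`: it takes the value `j` at
`v_{a,j}` and vanishes at `u`, `w` and on the other cycles. Its Laplacian at `u` and `w` does not
depend on `a`, and on the cycles it is `k - 1` at `v_{a,k-2}` and `0` elsewhere. Hence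
`L (f_a - f_b) ≡ 0 mod (k - 1)`, and pairing divisors with `f_a - f_b` descends to a character
`K(H_{k,n}) → ℤ/(k - 1)`. For three cycles `a₀, a₁, a₂`, the characters of `f_{a₀} - f_{a₂}` and
`f_{a₁} - f_{a₂}` take the values `(1, 0)` and `(0, 1)` on the classes of `v_{a₀,1} - u` and
`v_{a₁,1} - u`, so `K(H_{k,n})` surjects onto `(ℤ/(k - 1))²`, which is not cyclic. -/

open Matrix

theorem not_isAddCyclic_zmod_prod_zmod {m : ℕ} (hm : 2 ≤ m) :
    ¬ IsAddCyclic (ZMod m × ZMod m) := fun _ => by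
  have : NeZero m := ⟨by omega⟩
  have := coprime_card_of_isAddCyclic_prod (ZMod m) (ZMod m)
  rw [Nat.card_zmod, Nat.coprime_self] at this
  omega

theorem not_isAddCyclic_of_addMonoidHom_zmod_prod {A : Type*} [AddGroup A] {m : ℕ} (hm : 2 ≤ m)
    (ψ : A →+ ZMod m × ZMod m) {x y : A} (hx : ψ x = (1, 0)) (hy : ψ y = (0, 1)) :
    ¬ IsAddCyclic A := fun _ => by
  have : NeZero m := ⟨by omega⟩
  refine not_isAddCyclic_zmod_prod_zmod hm (isAddCyclic_of_surjective ψ fun ⟨p, q⟩ => ?_)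
  refine ⟨p.val • x + q.val • y, ?_⟩
  simp [hx, hy]

theorem dotProduct_pointDiff {V : Type*} [Fintype V] [DecidableEq V] (f : V → ℤ) (x y : V) :
    f ⬝ᵥ pointDiff x y = f x - f y := by
  simp [pointDiff, dotProduct, mul_sub, Finset.sum_sub_distrib]

def dotProductModHom {V : Type*} [Fintype V] (f : V → ℤ) (m : ℕ) : (V → ℤ) →+ ZMod m where
  toFun D := ((f ⬝ᵥ D : ℤ) : ZMod m)
  map_zero' := by simp
  map_add' D E := by simp [dotProduct_add]

section CriticalGroup

variable {V : Type*} [Fintype V] [DecidableEq V] (G : SimpleGraph V) [DecidableRel G.Adj]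

theorem dotProductModHom_lapMatrix_mulVec {f : V → ℤ} {m : ℕ}
    (hf : ∀ v, (m : ℤ) ∣ (G.lapMatrix ℤ *ᵥ f) v) (y : V → ℤ) :
    dotProductModHom f m (G.lapMatrix ℤ *ᵥ y) = 0 := by
  have hsymm : f ⬝ᵥ (G.lapMatrix ℤ *ᵥ y) = (G.lapMatrix ℤ *ᵥ f) ⬝ᵥ y := by
    rw [dotProduct_mulVec, ← mulVec_transpose, (G.isSymm_lapMatrix ℤ).eq]
  rw [dotProductModHom, AddMonoidHom.coe_mk, ZeroHom.coe_mk, hsymm,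
    ZMod.intCast_zmod_eq_zero_iff_dvd]
  exact Finset.dvd_sum fun v _ => (hf v).mul_right _

def criticalGroupPairing (f : V → ℤ) (m : ℕ) (hf : ∀ v, (m : ℤ) ∣ (G.lapMatrix ℤ *ᵥ f) v) :
    CriticalGroup G →+ ZMod m :=
  QuotientAddGroup.lift _ ((dotProductModHom f m).comp (Div0 V).subtype) <| by
    intro D hD
    obtain ⟨y, hy⟩ := AddSubgroup.mem_addSubgroupOf.mp hD
    rw [AddMonoidHom.mem_ker, AddMonoidHom.comp_apply, AddSubgroup.coe_subtype, ← hy]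
    exact dotProductModHom_lapMatrix_mulVec G hf y

theorem criticalGroupPairing_divisorClass {f : V → ℤ} {m : ℕ}
    (hf : ∀ v, (m : ℤ) ∣ (G.lapMatrix ℤ *ᵥ f) v) (D : V → ℤ) (hD : D ∈ Div0 V) :
    criticalGroupPairing G f m hf (divisorClass G D hD) = ((f ⬝ᵥ D : ℤ) : ZMod m) :=
  rfl

end CriticalGroup

theorem Fin.sum_ite_val_eq {M : Type*} [AddCommMonoid M] (N m : ℕ) (c : ℕ → M) :
    (∑ j : Fin N, if (j : ℕ) = m then c j else 0) = if m < N then c m else 0 := by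
  rw [Fin.sum_univ_eq_sum_range (fun j => if j = m then c j else 0), Finset.sum_ite_eq']
  simp only [Finset.mem_range]

theorem Fin.sum_ite_val_eq_add_one_or_add_one_eq {M : Type*} [AddCommMonoid M] {N m : ℕ}
    (hm : m < N) (c : ℕ → M) :
    (∑ j : Fin N, if (j : ℕ) = m + 1 ∨ m = j + 1 then c j else 0) =
      (if m + 1 < N then c (m + 1) else 0) + if 0 < m then c (m - 1) else 0 := by
  have hsplit (j : ℕ) : (if j = m + 1 ∨ m = j + 1 then c j else 0) =
      (if j = m + 1 then c j else 0) + if j = m - 1 then (if 0 < m then c j else 0) else 0 := by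
    split_ifs <;> first | omega | simp
  simp only [hsplit, Finset.sum_add_distrib, Fin.sum_ite_val_eq,
    Fin.sum_ite_val_eq N (m - 1) (fun j => if 0 < m then c j else 0)]
  rw [if_pos (show m - 1 < N by omega)]

namespace Hinge

variable {k n : ℕ}

def chainPotential (a : Fin n) : HingeVertex k n → ℤ
  | Sum.inl _ => 0
  | Sum.inr (i, j) => if i = a then j + 1 else 0

@[simp]
theorem adj_inl_inr (t : Fin 2) (p : Fin n × Fin (k - 2)) :
    (Hinge k n).Adj (Sum.inl t) (Sum.inr p) ↔
      t = 0 ∧ (p.2 : ℕ) = 0 ∨ t = 1 ∧ (p.2 : ℕ) = k - 3 := by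
  simp [Hinge, hingeRelB]

@[simp]
theorem adj_inr_inl (p : Fin n × Fin (k - 2)) (t : Fin 2) :
    (Hinge k n).Adj (Sum.inr p) (Sum.inl t) ↔
      t = 0 ∧ (p.2 : ℕ) = 0 ∨ t = 1 ∧ (p.2 : ℕ) = k - 3 := by
  rw [SimpleGraph.adj_comm, adj_inl_inr]

@[simp]
theorem adj_inr_inr (p q : Fin n × Fin (k - 2)) :
    (Hinge k n).Adj (Sum.inr p) (Sum.inr q) ↔
      p.1 = q.1 ∧ ((q.2 : ℕ) = p.2 + 1 ∨ (p.2 : ℕ) = q.2 + 1) := by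
  simp only [Hinge, SimpleGraph.fromRel_adj, hingeRelB, ne_eq, Sum.inr.injEq,
    Bool.and_eq_true, beq_iff_eq]
  constructor
  · rintro ⟨-, ⟨h1, h2⟩ | ⟨h1, h2⟩⟩
    exacts [⟨h1, .inl h2⟩, ⟨h1.symm, .inr h2⟩]
  · rintro ⟨h1, h2⟩
    refine ⟨fun h => ?_, by tauto⟩
    subst h
    omega

theorem sum_neighborFinset_chainPotential (a : Fin n) (x : HingeVertex k n) :
    ∑ y ∈ (Hinge k n).neighborFinset x, chainPotential a y =
      ∑ j : Fin (k - 2), if (Hinge k n).Adj x (Sum.inr (a, j)) then (j + 1 : ℤ) else 0 := by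
  rw [(Hinge k n).neighborFinset_eq_filter, Finset.sum_filter, Fintype.sum_sum_type,
    Fintype.sum_prod_type, Finset.sum_eq_single a (fun i _ hi => by simp [chainPotential, hi])
    (by simp)]
  simp [chainPotential]

theorem degree_inr (p : Fin n × Fin (k - 2)) : (Hinge k n).degree (Sum.inr p) = 2 := by
  rw [← SimpleGraph.card_neighborFinset_eq_degree, SimpleGraph.neighborFinset_eq_filter,
    Finset.card_filter, Fintype.sum_sum_type, Fintype.sum_prod_type,
    Finset.sum_eq_single p.1 (fun i _ hi => by simp [Ne.symm hi]) (by simp)]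
  simp only [adj_inr_inl, adj_inr_inr, true_and, Fin.sum_univ_two]
  rw [Fin.sum_ite_val_eq_add_one_or_add_one_eq p.2.isLt (fun _ => 1)]
  split_ifs <;> simp_all <;> omega

theorem lapMatrix_mulVec_chainPotential_inl (a b : Fin n) (t : Fin 2) :
    ((Hinge k n).lapMatrix ℤ *ᵥ chainPotential a) (Sum.inl t) =
      ((Hinge k n).lapMatrix ℤ *ᵥ chainPotential b) (Sum.inl t) := by
  simp only [SimpleGraph.lapMatrix_mulVec_apply, sum_neighborFinset_chainPotential, adj_inl_inr]
  rfl

theorem lapMatrix_mulVec_chainPotential_inr (a : Fin n) (p : Fin n × Fin (k - 2)) :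
    ((Hinge k n).lapMatrix ℤ *ᵥ chainPotential a) (Sum.inr p) =
      if p.1 = a ∧ (p.2 : ℕ) = k - 3 then (k : ℤ) - 1 else 0 := by
  rw [SimpleGraph.lapMatrix_mulVec_apply, degree_inr, sum_neighborFinset_chainPotential]
  by_cases hp : p.1 = a
  · simp only [hp, adj_inr_inr, true_and, chainPotential]
    rw [Fin.sum_ite_val_eq_add_one_or_add_one_eq p.2.isLt (fun j => (j : ℤ) + 1)]
    split_ifs <;> omega
  · simp [hp, chainPotential]

theorem dvd_lapMatrix_mulVec_chainPotential_sub (a b : Fin n) (x : HingeVertex k n) :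
    ((k - 1 : ℕ) : ℤ) ∣ ((Hinge k n).lapMatrix ℤ *ᵥ (chainPotential a - chainPotential b)) x := by
  rw [mulVec_sub, Pi.sub_apply]
  rcases x with t | p
  · rw [lapMatrix_mulVec_chainPotential_inl a b, sub_self]
    exact dvd_zero _
  · have hk : ((k - 1 : ℕ) : ℤ) = k - 1 := by have := p.2.isLt; omega
    rw [lapMatrix_mulVec_chainPotential_inr, lapMatrix_mulVec_chainPotential_inr, hk]
    split_ifs <;> simp only [sub_self, sub_zero, zero_sub, dvd_neg, dvd_refl, dvd_zero]

end Hinge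

/-- For all integers `k ≥ 3` and `n ≥ 3`, the critical group `K(H_{k,n})`
is not cyclic. -/
theorem hinge_criticalGroup_not_cyclic (k n : ℕ) (hk : 3 ≤ k) (hn : 3 ≤ n) :
    ¬ IsAddCyclic (CriticalGroup (Hinge k n)) := by
  let c : Fin 3 → Fin n := Fin.castLE hn
  let χ (a : Fin n) : CriticalGroup (Hinge k n) →+ ZMod (k - 1) :=
    criticalGroupPairing _ (Hinge.chainPotential a - Hinge.chainPotential (c 2)) (k - 1)
      (Hinge.dvd_lapMatrix_mulVec_chainPotential_sub a (c 2))
  let D (i : Fin n) : CriticalGroup (Hinge k n) :=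
    divisorClass _ (pointDiff (Sum.inr (i, ⟨0, by omega⟩)) (Sum.inl 0)) (pointDiff_mem _ _)
  have hχD (a i : Fin n) :
      χ a (D i) = (((if i = a then 1 else 0) - if i = c 2 then 1 else 0 : ℤ) : ZMod (k - 1)) := by
    simp [χ, D, criticalGroupPairing_divisorClass, dotProduct_pointDiff,
      Hinge.chainPotential]
  refine not_isAddCyclic_of_addMonoidHom_zmod_prod (m := k - 1) (by omega)
    ((χ (c 0)).prod (χ (c 1))) (x := D (c 0)) (y := D (c 1)) ?_ ?_ <;>
  simp [hχD, c, Fin.ext_iff]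
end
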